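/- arXiv:1310.1386 — 2 statements merged into one kernel-verified Lean document; each statement's English description precedes it below -/
import Mathlib

section
/- For all integers r ≥ 2 and a ≥ r, there exists a surjective colouring Δ: ℕ^(r) ↠ [k] with k = C(a,r) + 1 such that F_Δ = { C(n,r) + 1 : n a natural number with n ≤ a }. (Such a colouring is given by colouring all r-subsets of [a] with C(a,r) distinct colours and all remaining r-subsets of ℕ with one further colour.) -/
open Finset

/-- The set of colours attained by `Δ` on `r`-element subsets of `X`. -/
def coloursOn {α : Type*} (r : ℕ) (Δ : Finset ℕ → α) (X : Set ℕ) : Set α :=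
  Δ '' {e : Finset ℕ | ↑e ⊆ X ∧ e.card = r}

/-- `γ(X)`: the number of colours attained by `Δ` on `r`-element subsets of `X`. -/
noncomputable def gamma {α : Type*} (r : ℕ) (Δ : Finset ℕ → α) (X : Set ℕ) : ℕ :=
  (coloursOn r Δ X).ncard

/-- `F_Δ`: the set of values `γ(X)` over infinite subsets `X ⊆ ℕ`. -/
def Fdelta {α : Type*} (r : ℕ) (Δ : Finset ℕ → α) : Set ℕ :=
  {m | ∃ X : Set ℕ, X.Infinite ∧ gamma r Δ X = m}

/-- `Δ` is a surjective colouring of `ℕ^(r)`, the `r`-element subsets of `ℕ`,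
onto the colour set `[k] = {1, …, k}`. -/
def IsColouring (r k : ℕ) (Δ : Finset ℕ → ℕ) : Prop :=
  (∀ e : Finset ℕ, e.card = r → Δ e ∈ Finset.Icc 1 k) ∧
  ∀ c ∈ Finset.Icc 1 k, ∃ e : Finset ℕ, e.card = r ∧ Δ e = c

/-!
Colour the `r`-subsets of a finite set `A` injectively and every other `r`-set with
one extra colour `c₀`. An infinite `X` always contains an `r`-set outside `A`, so it sees `c₀`
together with one colour for each `r`-subset of `A ∩ X`: `γ(X) = C(|A ∩ X|, r) + 1`. Conversely
`X = B ∪ (ℕ \ A)` realises `|A ∩ X| = |B|` for every `B ⊆ A`, so `F_Δ = {C(n, r) + 1 : n ≤ |A|}`.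
-/

lemma coloursOn_mono {α : Type*} (r : ℕ) (Δ : Finset ℕ → α) {X Y : Set ℕ} (hXY : X ⊆ Y) :
    coloursOn r Δ X ⊆ coloursOn r Δ Y :=
  Set.image_mono fun _ ⟨heX, he⟩ => ⟨heX.trans hXY, he⟩

lemma coloursOn_coe_finset {α : Type*} (r : ℕ) (Δ : Finset ℕ → α) (T : Finset ℕ) :
    coloursOn r Δ ↑T = Δ '' ↑(T.powersetCard r) := by
  simp only [coloursOn, coe_subset]
  congr 1
  ext e
  simp

lemma exists_card_eq_not_subset {r : ℕ} (hr : r ≠ 0) (A : Finset ℕ) {X : Set ℕ}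
    (hX : X.Infinite) : ∃ e : Finset ℕ, ↑e ⊆ X ∧ e.card = r ∧ ¬ e ⊆ A := by
  obtain ⟨e, heX, he⟩ := (hX.sdiff A.finite_toSet).exists_subset_card_eq r
  obtain ⟨x, hx⟩ := card_pos.mp (he ▸ Nat.pos_of_ne_zero hr)
  exact ⟨e, heX.trans Set.sdiff_subset, he, fun heA => (heX hx).2 (heA hx)⟩

structure IsSmallRainbow {α : Type*} (r : ℕ) (A : Finset ℕ) (c₀ : α)
    (Δ : Finset ℕ → α) : Prop where
  injOn : Set.InjOn Δ ↑(A.powersetCard r)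
  ne : ∀ e ∈ A.powersetCard r, Δ e ≠ c₀
  eq_of_notMem : ∀ e : Finset ℕ, e.card = r → e ∉ A.powersetCard r → Δ e = c₀

namespace IsSmallRainbow

variable {α : Type*} {r : ℕ} {A : Finset ℕ} {c₀ : α} {Δ : Finset ℕ → α}

lemma coloursOn_eq_insert (h : IsSmallRainbow r A c₀ Δ) (hr : r ≠ 0) {X : Set ℕ}
    (hX : X.Infinite) : coloursOn r Δ X = insert c₀ (coloursOn r Δ (↑A ∩ X)) := by
  apply subset_antisymm
  · rintro _ ⟨e, ⟨heX, he⟩, rfl⟩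
    by_cases heA : e ⊆ A
    · exact Or.inr ⟨e, ⟨Set.subset_inter (coe_subset.mpr heA) heX, he⟩, rfl⟩
    · exact Or.inl (h.eq_of_notMem e he fun hmem => heA (mem_powersetCard.mp hmem).1)
  · refine Set.insert_subset ?_ (coloursOn_mono r Δ Set.inter_subset_right)
    obtain ⟨e, heX, he, heA⟩ := exists_card_eq_not_subset hr A hX
    exact ⟨e, ⟨heX, he⟩, h.eq_of_notMem e he fun hmem => heA (mem_powersetCard.mp hmem).1⟩

lemma ncard_coloursOn_finset (h : IsSmallRainbow r A c₀ Δ) {T : Finset ℕ} (hT : T ⊆ A) :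
    (coloursOn r Δ ↑T).ncard = T.card.choose r := by
  rw [coloursOn_coe_finset, (h.injOn.mono ?_).ncard_image, Set.ncard_coe_finset,
    card_powersetCard]
  exact coe_subset.mpr (powersetCard_mono hT)

lemma notMem_coloursOn (h : IsSmallRainbow r A c₀ Δ) {Y : Set ℕ} (hY : Y ⊆ ↑A) :
    c₀ ∉ coloursOn r Δ Y := by
  rintro ⟨e, ⟨heY, he⟩, hc⟩
  exact h.ne e (mem_powersetCard.mpr ⟨coe_subset.mp (heY.trans hY), he⟩) hc

lemma gamma_eq (h : IsSmallRainbow r A c₀ Δ) (hr : r ≠ 0) {X : Set ℕ} (hX : X.Infinite) :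
    gamma r Δ X = (↑A ∩ X).ncard.choose r + 1 := by
  obtain ⟨T, hT⟩ : ∃ T : Finset ℕ, ↑T = ↑A ∩ X :=
    ⟨_, (A.finite_toSet.inter_of_left X).coe_toFinset⟩
  have hTA : T ⊆ A := coe_subset.mp (hT ▸ Set.inter_subset_left)
  have hfin : (coloursOn r Δ ↑T).Finite := by
    rw [coloursOn_coe_finset]
    exact (finite_toSet _).image Δ
  rw [gamma, h.coloursOn_eq_insert hr hX, ← hT, Set.ncard_insert_of_notMem
    (h.notMem_coloursOn (coe_subset.mpr hTA)) hfin, h.ncard_coloursOn_finset hTA,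
    Set.ncard_coe_finset]

lemma Fdelta_eq (h : IsSmallRainbow r A c₀ Δ) (hr : r ≠ 0) :
    Fdelta r Δ = {m : ℕ | ∃ n : ℕ, n ≤ A.card ∧ m = n.choose r + 1} := by
  ext m
  constructor
  · rintro ⟨X, hX, rfl⟩
    refine ⟨(↑A ∩ X).ncard, ?_, h.gamma_eq hr hX⟩
    calc (↑A ∩ X).ncard ≤ (↑A : Set ℕ).ncard := Set.ncard_le_ncard Set.inter_subset_left
      _ = A.card := Set.ncard_coe_finset A
  · rintro ⟨n, hn, rfl⟩
    obtain ⟨B, hBA, rfl⟩ := exists_subset_card_eq hn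
    have hX : (↑B ∪ (↑A)ᶜ : Set ℕ).Infinite :=
      A.finite_toSet.infinite_compl.mono Set.subset_union_right
    have hAX : ↑A ∩ (↑B ∪ (↑A)ᶜ) = (↑B : Set ℕ) := by
      rw [Set.inter_union_distrib_left, Set.inter_compl_self, Set.union_empty,
        Set.inter_eq_right.mpr (coe_subset.mpr hBA)]
    exact ⟨_, hX, by rw [h.gamma_eq hr hX, hAX, Set.ncard_coe_finset]⟩

end IsSmallRainbow

noncomputable def rainbowOn (S : Finset (Finset ℕ)) (e : Finset ℕ) : ℕ :=
  if h : e ∈ S then S.equivFin ⟨e, h⟩ + 2 else 1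

section rainbowOn

variable {S : Finset (Finset ℕ)} {e : Finset ℕ}

lemma rainbowOn_of_mem (h : e ∈ S) : rainbowOn S e = S.equivFin ⟨e, h⟩ + 2 := dif_pos h

lemma rainbowOn_of_notMem (h : e ∉ S) : rainbowOn S e = 1 := dif_neg h

lemma rainbowOn_mem_Icc (S : Finset (Finset ℕ)) (e : Finset ℕ) :
    rainbowOn S e ∈ Icc 1 (S.card + 1) := by
  by_cases h : e ∈ S
  · have := (S.equivFin ⟨e, h⟩).isLt
    rw [rainbowOn_of_mem h, mem_Icc]
    omega
  · simp [rainbowOn_of_notMem h]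

lemma rainbowOn_injOn (S : Finset (Finset ℕ)) : Set.InjOn (rainbowOn S) ↑S := by
  intro e₁ h₁ e₂ h₂ h
  rw [rainbowOn_of_mem h₁, rainbowOn_of_mem h₂, add_left_inj] at h
  exact congrArg Subtype.val (S.equivFin.injective (Fin.ext h))

lemma exists_mem_rainbowOn_eq {c : ℕ} (hc : c ∈ Icc 2 (S.card + 1)) :
    ∃ e ∈ S, rainbowOn S e = c := by
  rw [mem_Icc] at hc
  obtain ⟨⟨e, he⟩, hi⟩ : ∃ x, S.equivFin x = ⟨c - 2, by omega⟩ := S.equivFin.surjective _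
  refine ⟨e, he, ?_⟩
  rw [rainbowOn_of_mem he, hi, Fin.val_mk]
  omega

lemma isSmallRainbow_rainbowOn (r : ℕ) (A : Finset ℕ) :
    IsSmallRainbow r A 1 (rainbowOn (A.powersetCard r)) where
  injOn := rainbowOn_injOn _
  ne e he := by rw [rainbowOn_of_mem he]; omega
  eq_of_notMem _ _ he := rainbowOn_of_notMem he

lemma isColouring_rainbowOn {r : ℕ} (hr : r ≠ 0) (A : Finset ℕ) :
    IsColouring r ((A.powersetCard r).card + 1) (rainbowOn (A.powersetCard r)) := by
  refine ⟨fun e _ => rainbowOn_mem_Icc _ e, fun c hc => ?_⟩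
  obtain rfl | hc2 := eq_or_ne c 1
  · obtain ⟨e, -, he, heA⟩ := exists_card_eq_not_subset hr A Set.infinite_univ
    exact ⟨e, he, rainbowOn_of_notMem fun hmem => heA (mem_powersetCard.mp hmem).1⟩
  · have hc' : c ∈ Icc 2 ((A.powersetCard r).card + 1) := by
      rw [mem_Icc] at hc ⊢
      omega
    obtain ⟨e, he, rfl⟩ := exists_mem_rainbowOn_eq hc'
    exact ⟨e, (mem_powersetCard.mp he).2, rfl⟩

end rainbowOn

theorem small_rainbow_colouring_general (r a : ℕ) (hr : 2 ≤ r) :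
    ∃ Δ : Finset ℕ → ℕ, IsColouring r (Nat.choose a r + 1) Δ ∧
      Fdelta r Δ = {m : ℕ | ∃ n : ℕ, n ≤ a ∧ m = Nat.choose n r + 1} := by
  have hr0 : r ≠ 0 := by omega
  have hcard : ((range a).powersetCard r).card = a.choose r := by
    rw [card_powersetCard, card_range]
  refine ⟨rainbowOn ((range a).powersetCard r), hcard ▸ isColouring_rainbowOn hr0 (range a), ?_⟩
  rw [(isSmallRainbow_rainbowOn r (range a)).Fdelta_eq hr0, card_range]

/-- **Small-rainbow colouring.** For `r ≥ 2` and `a ≥ r`, there is a surjective colouring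
`Δ : ℕ^(r) ↠ [k]` with `k = C(a,r) + 1` such that `F_Δ = { C(n,r) + 1 : n ≤ a }`. -/
theorem small_rainbow_colouring (r a : ℕ) (hr : 2 ≤ r) (ha : r ≤ a) :
    ∃ Δ : Finset ℕ → ℕ, IsColouring r (Nat.choose a r + 1) Δ ∧
      Fdelta r Δ = {m : ℕ | ∃ n : ℕ, n ≤ a ∧ m = Nat.choose n r + 1} :=
  small_rainbow_colouring_general r a hr
end

section
/- Let r ≥ 2 and k ≥ 1 be integers, let Δ: ℕ^(r) ↠ [k] be a surjective colouring, and let m ∈ F_Δ with m ≥ 2. Then there exists a natural number a ≥ 1 such that Σ_{i=0}^{r} C(a,i) ≥ m and there exists m' ∈ F_Δ with m - min( Σ_{i=0}^{r-1} C(a-1,i), r(m-1)/a ) ≤ m' < m. -/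
/-!
By Ramsey's theorem an infinite `X` contains `A ∪ Y`, with `A` finite, `Y` infinite and disjoint
from `A`, on which the colour of an `r`-set depends only on its trace on `A` and
`γ(A ∪ Y) = γ(X)`. Then `γ(B ∪ Y)`, for `B ⊆ A`, counts the colours `φ S` of the traces
`S ⊆ B` with `|S| ≤ r`, which gives `m ≤ Σ_{i ≤ r} C(a, i)` for `a = |A|`. Take `A` of minimal
size. For `w ∈ A`, the set `B = A \ {w}` loses at least one colour by minimality. Every lost colour
has `w` in each of its traces, so at most `Σ_{i < r} C(a - 1, i)` colours are lost. The colour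
`φ ∅` is never lost and any other colour is lost only for the at most `r` points of one of its
traces, so averaging over `w` gives a `w` that loses at most `r (m - 1) / a` colours.
-/

open Finset

section SmallSubsets

variable {α β : Type*} [DecidableEq α]

def imageSmallSubsets (φ : Finset β → α) (r : ℕ) (B : Finset β) : Finset α :=
  {S ∈ B.powerset | S.card ≤ r}.image φ

lemma card_filter_powerset_card_lt_le (B : Finset β) (t : ℕ) :
    #{S ∈ B.powerset | S.card < t} ≤ ∑ i ∈ range t, B.card.choose i := by
  classical
  calc #{S ∈ B.powerset | S.card < t}
      ≤ #((range t).biUnion fun i => B.powersetCard i) := by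
        refine card_le_card fun S hS => ?_
        simp only [mem_filter, mem_powerset] at hS
        simpa using hS.symm
    _ ≤ ∑ i ∈ range t, #(B.powersetCard i) := card_biUnion_le
    _ = ∑ i ∈ range t, B.card.choose i := by simp only [card_powersetCard]

variable (φ : Finset β → α) (r : ℕ)

lemma imageSmallSubsets_mono {B B' : Finset β} (h : B ⊆ B') :
    imageSmallSubsets φ r B ⊆ imageSmallSubsets φ r B' :=
  image_subset_image (filter_subset_filter _ (powerset_mono.mpr h))

lemma card_imageSmallSubsets_le (B : Finset β) :
    #(imageSmallSubsets φ r B) ≤ ∑ i ∈ range (r + 1), B.card.choose i :=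
  card_image_le.trans <| by
    simpa only [Nat.lt_succ_iff] using card_filter_powerset_card_lt_le B (r + 1)

lemma empty_mem_imageSmallSubsets (B : Finset β) : φ ∅ ∈ imageSmallSubsets φ r B :=
  mem_image_of_mem φ (by simp)

variable {φ r}

lemma nonempty_of_one_lt_card_imageSmallSubsets {B : Finset β}
    (h : 1 < #(imageSmallSubsets φ r B)) : B.Nonempty := by
  rw [nonempty_iff_ne_empty]
  rintro rfl
  have := card_imageSmallSubsets_le φ r ∅
  simp only [card_empty, sum_range_succ', Nat.choose_zero_succ, sum_const_zero,
    Nat.choose_self] at this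
  omega

lemma exists_of_mem_imageSmallSubsets {B : Finset β} {c : α}
    (hc : c ∈ imageSmallSubsets φ r B) : ∃ S ⊆ B, S.card ≤ r ∧ φ S = c := by
  simpa [imageSmallSubsets, and_assoc] using hc

lemma mem_of_mem_imageSmallSubsets_sdiff_erase [DecidableEq β] {A S : Finset β} {w : β}
    (hc : φ S ∉ imageSmallSubsets φ r (A.erase w)) (hSA : S ⊆ A) (hSr : S.card ≤ r) :
    w ∈ S := by
  by_contra hw
  exact hc (mem_image_of_mem φ (by simpa [hSr] using subset_erase.mpr ⟨hSA, hw⟩))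

lemma card_imageSmallSubsets_sdiff_erase_le [DecidableEq β] {A : Finset β} {w : β}
    (hw : w ∈ A) :
    #(imageSmallSubsets φ r A \ imageSmallSubsets φ r (A.erase w)) ≤
      ∑ i ∈ range r, (A.card - 1).choose i := by
  calc #(imageSmallSubsets φ r A \ imageSmallSubsets φ r (A.erase w))
      ≤ #({S ∈ (A.erase w).powerset | S.card < r}.image fun S => φ (insert w S)) := by
        refine card_le_card fun c hc => ?_
        obtain ⟨hcA, hcw⟩ := mem_sdiff.mp hc
        obtain ⟨S, hSA, hSr, rfl⟩ := exists_of_mem_imageSmallSubsets hcA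
        have hwS := mem_of_mem_imageSmallSubsets_sdiff_erase hcw hSA hSr
        refine mem_image.mpr ⟨S.erase w, ?_, by rw [insert_erase hwS]⟩
        simp only [mem_filter, mem_powerset, card_erase_of_mem hwS]
        exact ⟨erase_subset_erase w hSA, by have := card_pos.mpr ⟨w, hwS⟩; omega⟩
    _ ≤ ∑ i ∈ range r, (A.card - 1).choose i := by
        rw [← card_erase_of_mem hw]
        exact card_image_le.trans (card_filter_powerset_card_lt_le _ _)

lemma sum_card_imageSmallSubsets_sdiff_erase_le [DecidableEq β] (A : Finset β) :
    ∑ w ∈ A, #(imageSmallSubsets φ r A \ imageSmallSubsets φ r (A.erase w)) ≤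
      r * (#(imageSmallSubsets φ r A) - 1) := by
  set T := (imageSmallSubsets φ r A).erase (φ ∅)
  let lost : β → α → Prop := fun w c => c ∉ imageSmallSubsets φ r (A.erase w)
  have hlost : ∀ w, imageSmallSubsets φ r A \ imageSmallSubsets φ r (A.erase w) =
      T.bipartiteAbove lost w := by
    intro w
    ext c
    have := empty_mem_imageSmallSubsets φ r (A.erase w)
    simp only [mem_sdiff, mem_bipartiteAbove, T, mem_erase, lost]
    grind
  -- A colour `φ S` other than `φ ∅` can only be lost when removing a point of `S`.
  have hbelow : ∀ c ∈ T, #(A.bipartiteBelow lost c) ≤ r := by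
    intro c hc
    obtain ⟨S, hSA, hSr, rfl⟩ := exists_of_mem_imageSmallSubsets (mem_of_mem_erase hc)
    refine (card_le_card fun w hw => ?_).trans hSr
    rw [mem_bipartiteBelow] at hw
    exact mem_of_mem_imageSmallSubsets_sdiff_erase hw.2 hSA hSr
  calc ∑ w ∈ A, #(imageSmallSubsets φ r A \ imageSmallSubsets φ r (A.erase w))
      = ∑ c ∈ T, #(A.bipartiteBelow lost c) := by
        simp only [hlost, sum_card_bipartiteAbove_eq_sum_card_bipartiteBelow]
    _ ≤ #T * r := sum_le_card_nsmul _ _ _ hbelow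
    _ = r * (#(imageSmallSubsets φ r A) - 1) := by
        rw [card_erase_of_mem (empty_mem_imageSmallSubsets φ r A), mul_comm]

lemma exists_card_imageSmallSubsets_sdiff_erase_mul_le [DecidableEq β] {A : Finset β}
    (hA : A.Nonempty) : ∃ w ∈ A,
      #(imageSmallSubsets φ r A \ imageSmallSubsets φ r (A.erase w)) * #A ≤
        r * (#(imageSmallSubsets φ r A) - 1) := by
  refine exists_le_of_sum_le hA ?_
  rw [← sum_mul, sum_const, smul_eq_mul, mul_comm #A]
  exact Nat.mul_le_mul_right _ (sum_card_imageSmallSubsets_sdiff_erase_le A)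

end SmallSubsets

lemma exists_mem_erase_subset_of_subset_image {β : Type*} [DecidableEq β] {S : ℕ → Set β}
    {y : ℕ → β} (hS : Antitone S) (hy : ∀ j, y j ∈ S j) {I : Set ℕ} {f : Finset β}
    (hf : ↑f ⊆ y '' I) (hne : f.Nonempty) :
    ∃ j ∈ I, y j ∈ f ∧ ↑(f.erase (y j)) ⊆ S (j + 1) := by
  classical
  have hex : ∃ j, j ∈ I ∧ y j ∈ f := by
    obtain ⟨x, hx⟩ := hne
    obtain ⟨j, hj, rfl⟩ := hf hx
    exact ⟨j, hj, hx⟩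
  obtain ⟨hjI, hjf⟩ := Nat.find_spec hex
  refine ⟨Nat.find hex, hjI, hjf, fun x hx => ?_⟩
  obtain ⟨hxj, hxf⟩ := mem_erase.mp hx
  obtain ⟨l, hl, rfl⟩ := hf hxf
  have hle : Nat.find hex ≤ l := Nat.find_min' hex ⟨hl, hxf⟩
  have hne : Nat.find hex ≠ l := by rintro rfl; exact hxj rfl
  exact hS (by omega) (hy l)

lemma injective_of_antitone_of_notMem_succ {β : Type*} {S : ℕ → Set β} {y : ℕ → β}
    (hS : Antitone S) (hy : ∀ j, y j ∈ S j) (hy' : ∀ j, y j ∉ S (j + 1)) :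
    Function.Injective y := by
  have key : ∀ i j, i < j → y i ≠ y j := fun i j hij h =>
    hy' i (h ▸ hS (Nat.succ_le_of_lt hij) (hy j))
  intro i j h
  by_contra hij
  rcases Nat.lt_or_gt_of_ne hij with hij | hij
  · exact key i j hij h
  · exact key j i hij h.symm

theorem exists_infinite_subset_homogeneous {ι : Type*} [Finite ι] (n : ℕ)
    (C : Finset ℕ → ι) {Y : Set ℕ} (hY : Y.Infinite) :
    ∃ Z ⊆ Y, Z.Infinite ∧ ∃ c, ∀ f : Finset ℕ, ↑f ⊆ Z → f.card = n → C f = c := by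
  induction n generalizing C Y with
  | zero => exact ⟨Y, subset_rfl, hY, C ∅, fun f _ hf => by rw [card_eq_zero.mp hf]⟩
  | succ n ih =>
    have step (S : Set ℕ) (hS : S.Infinite) := ih (fun f => C (insert (sInf S) f))
      (hS.sdiff (Set.finite_singleton (sInf S)))
    choose next hnext hinf col hcol using step
    -- `y j` with any `n` points of `S (j + 1)` has colour `col (S j)`; pigeonhole on these.
    let seq : ℕ → {S : Set ℕ // S.Infinite} :=
      fun j => Nat.rec ⟨Y, hY⟩ (fun _ p => ⟨next p.1 p.2, hinf p.1 p.2⟩) j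
    let S j := (seq j).1
    let y j := sInf (S j)
    have hy j : y j ∈ S j := Nat.sInf_mem (seq j).2.nonempty
    have hsucc j : S (j + 1) ⊆ S j \ {y j} := hnext _ (seq j).2
    have hS : Antitone S := antitone_nat_of_succ_le fun j => (hsucc j).trans Set.sdiff_subset
    have hinj : Function.Injective y :=
      injective_of_antitone_of_notMem_succ hS hy fun j h => ((hsucc j) h).2 rfl
    obtain ⟨v, hv⟩ := Finite.exists_infinite_fiber fun j => col (S j) (seq j).2
    refine ⟨y '' _, ?_, (Set.infinite_coe_iff.mp hv).image hinj.injOn, v, fun f hf hcard => ?_⟩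
    · rintro _ ⟨j, -, rfl⟩
      exact hS (Nat.zero_le j) (hy j)
    · obtain ⟨j, hj, hjf, hsub⟩ := exists_mem_erase_subset_of_subset_image hS hy hf
        (card_pos.mp (by omega))
      rw [← insert_erase hjf, ← hj]
      exact hcol _ (seq j).2 _ hsub (by rw [card_erase_of_mem hjf, hcard]; rfl)

theorem exists_infinite_subset_forall_homogeneous {β ι : Type*} [Finite ι] (P : Finset β)
    (n : β → ℕ) (C : β → Finset ℕ → ι) {Y : Set ℕ} (hY : Y.Infinite) :
    ∃ Z ⊆ Y, Z.Infinite ∧ ∀ p ∈ P, ∃ c, ∀ f : Finset ℕ, ↑f ⊆ Z → f.card = n p → C p f = c := by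
  classical
  induction P using Finset.induction_on with
  | empty => exact ⟨Y, subset_rfl, hY, by simp⟩
  | insert p P _ ih =>
    obtain ⟨Z₁, hZ₁Y, hZ₁, hP⟩ := ih
    obtain ⟨Z, hZZ₁, hZ, c, hc⟩ := exists_infinite_subset_homogeneous (n p) (C p) hZ₁
    refine ⟨Z, hZZ₁.trans hZ₁Y, hZ, fun q hq => ?_⟩
    rcases mem_insert.mp hq with rfl | hq
    · exact ⟨c, hc⟩
    · obtain ⟨c', hc'⟩ := hP q hq
      exact ⟨c', fun f hf => hc' f (hf.trans hZZ₁)⟩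

section CanonicalPair

variable {α : Type*} (r : ℕ) (Δ : Finset ℕ → α)

lemma coloursOn_mono_s7 {X X' : Set ℕ} (h : X ⊆ X') : coloursOn r Δ X ⊆ coloursOn r Δ X' :=
  Set.image_mono fun _ he => ⟨he.1.trans h, he.2⟩

def IsCanonicalPair (A : Finset ℕ) (Y : Set ℕ) : Prop :=
  Y.Infinite ∧ Disjoint (↑A : Set ℕ) Y ∧
    ∀ e₁ e₂ : Finset ℕ, e₁.card = r → e₂.card = r → ↑e₁ ⊆ ↑A ∪ Y → ↑e₂ ⊆ ↑A ∪ Y →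
      e₁ ∩ A = e₂ ∩ A → Δ e₁ = Δ e₂

variable {r Δ}

lemma inter_eq_inter_of_subset_union {A B e : Finset ℕ} {Y : Set ℕ} (hBA : B ⊆ A)
    (hAY : Disjoint (↑A : Set ℕ) Y) (he : ↑e ⊆ ↑B ∪ Y) : e ∩ A = e ∩ B := by
  refine Subset.antisymm (fun x hx => ?_) (inter_subset_inter_left hBA)
  obtain ⟨hxe, hxA⟩ := mem_inter.mp hx
  refine mem_inter.mpr ⟨hxe, (he hxe).resolve_right fun hxY => ?_⟩
  exact Set.disjoint_left.mp hAY hxA hxY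

lemma IsCanonicalPair.mono {A B : Finset ℕ} {Y : Set ℕ} (h : IsCanonicalPair r Δ A Y)
    (hBA : B ⊆ A) : IsCanonicalPair r Δ B Y := by
  obtain ⟨hY, hAY, hcan⟩ := h
  have hBY : ↑B ∪ Y ⊆ ↑A ∪ Y := Set.union_subset_union_left Y (coe_subset.mpr hBA)
  refine ⟨hY, hAY.mono_left (coe_subset.mpr hBA), fun e₁ e₂ h₁ h₂ hs₁ hs₂ htr => ?_⟩
  refine hcan e₁ e₂ h₁ h₂ (hs₁.trans hBY) (hs₂.trans hBY) ?_
  rw [inter_eq_inter_of_subset_union hBA hAY hs₁, inter_eq_inter_of_subset_union hBA hAY hs₂, htr]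

lemma exists_infinite_subset_colour_eq_of_inter_eq {K : Set α} (hK : K.Finite) (W : Finset ℕ)
    {Y : Set ℕ} (hY : Y.Infinite) :
    ∃ Z ⊆ Y, Z.Infinite ∧ ∀ e₁ e₂ : Finset ℕ, e₁.card = r → e₂.card = r →
      ↑e₁ ⊆ ↑W ∪ Z → ↑e₂ ⊆ ↑W ∪ Z → e₁ ∩ W = e₂ ∩ W → Δ e₁ ∈ K → Δ e₂ ∈ K → Δ e₁ = Δ e₂ := by
  classical
  have := hK.to_subtype
  -- Colours outside `K` are sent to `none`, so that Ramsey's theorem sees finitely many colours.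
  obtain ⟨Z, hZY, hZ, hhom⟩ := exists_infinite_subset_forall_homogeneous W.powerset
    (fun S => r - S.card) (fun S f => if h : Δ (S ∪ f) ∈ K then some (⟨_, h⟩ : K) else none) hY
  refine ⟨Z, hZY, hZ, fun e₁ e₂ h₁ h₂ hs₁ hs₂ htr hK₁ hK₂ => ?_⟩
  obtain ⟨c, hc⟩ := hhom (e₁ ∩ W) (mem_powerset.mpr inter_subset_right)
  have key : ∀ e : Finset ℕ, e.card = r → ↑e ⊆ ↑W ∪ Z → e ∩ W = e₁ ∩ W → (heK : Δ e ∈ K) →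
      some ⟨Δ e, heK⟩ = c := by
    intro e he hs htr heK
    have hsd : ↑(e \ W) ⊆ Z := by rw [coe_sdiff]; exact Set.sdiff_subset_iff.mpr hs
    have hcard : (e \ W).card = r - (e₁ ∩ W).card := by
      have := card_sdiff_add_card_inter e W
      rw [htr] at this
      omega
    have := hc (e \ W) hsd hcard
    rwa [← htr, union_comm, sdiff_union_inter, dif_pos heK] at this
  simpa using (key e₁ h₁ hs₁ rfl hK₁).trans (key e₂ h₂ hs₂ htr.symm hK₂).symm

lemma exists_isCanonicalPair {X : Set ℕ} (hX : X.Infinite) (hfin : (coloursOn r Δ X).Finite) :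
    ∃ A Y, IsCanonicalPair r Δ A Y ∧ coloursOn r Δ (↑A ∪ Y) = coloursOn r Δ X := by
  classical
  -- `W` contains one `r`-set of each colour.
  obtain ⟨E, hEX, hE⟩ := subset_set_image_iff.mp hfin.coe_toFinset.subset
  set W := E.biUnion id
  have hWX : ↑W ⊆ X := by
    intro x hx
    simp only [W, coe_biUnion, Set.mem_iUnion] at hx
    obtain ⟨e, he, hxe⟩ := hx
    exact (hEX he).1 hxe
  obtain ⟨Z, hZ, hZinf, hcan⟩ :=
    exists_infinite_subset_colour_eq_of_inter_eq hfin W (hX.sdiff W.finite_toSet)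
  have hWZX : ↑W ∪ Z ⊆ X := Set.union_subset hWX (hZ.trans Set.sdiff_subset)
  refine ⟨W, Z, ⟨hZinf, ?_, fun e₁ e₂ h₁ h₂ hs₁ hs₂ htr => ?_⟩, ?_⟩
  · exact Set.disjoint_right.mpr fun x hx => (hZ hx).2
  · exact hcan e₁ e₂ h₁ h₂ hs₁ hs₂ htr (coloursOn_mono_s7 r Δ hWZX ⟨e₁, ⟨hs₁, h₁⟩, rfl⟩)
      (coloursOn_mono_s7 r Δ hWZX ⟨e₂, ⟨hs₂, h₂⟩, rfl⟩)
  · refine (coloursOn_mono_s7 r Δ hWZX).antisymm ?_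
    rw [← hfin.coe_toFinset, ← hE, coe_image]
    rintro _ ⟨e, he, rfl⟩
    refine ⟨e, ⟨fun x hx => Or.inl ?_, (hEX he).2⟩, rfl⟩
    exact mem_biUnion.mpr ⟨e, he, hx⟩

lemma IsCanonicalPair.exists_gamma_eq [DecidableEq α] {A : Finset ℕ} {Y : Set ℕ}
    (h : IsCanonicalPair r Δ A Y) :
    ∃ φ : Finset ℕ → α, ∀ B ⊆ A, gamma r Δ (↑B ∪ Y) = #(imageSmallSubsets φ r B) := by
  obtain ⟨hY, hAY, hcan⟩ := h
  choose fill hfillY hfill using hY.exists_subset_card_eq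
  -- The colour of an `r`-set is determined by its trace `S` on `A`; `S ∪ fill (r - |S|)` is
  -- a representative with that trace.
  have hrep : ∀ S ⊆ A, S.card ≤ r →
      ↑(S ∪ fill (r - S.card)) ⊆ ↑S ∪ Y ∧ (S ∪ fill (r - S.card)).card = r ∧
        (S ∪ fill (r - S.card)) ∩ A = S := by
    intro S hSA hSr
    have hdisj : Disjoint S (fill (r - S.card)) := by
      rw [← disjoint_coe]
      exact (hAY.mono_left (coe_subset.mpr hSA)).mono_right (hfillY _)
    refine ⟨by rw [coe_union]; exact Set.union_subset_union_right _ (hfillY _), ?_, ?_⟩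
    · rw [card_union_of_disjoint hdisj, hfill]; omega
    · rw [union_inter_distrib_right, inter_eq_left.mpr hSA, union_eq_left]
      exact fun x hx => absurd (hfillY _ (mem_inter.mp hx).1)
        (Set.disjoint_left.mp hAY (mem_inter.mp hx).2)
  refine ⟨fun S => Δ (S ∪ fill (r - S.card)), fun B hBA => ?_⟩
  rw [gamma, ← Set.ncard_coe_finset]
  congr 1
  ext c
  simp only [coloursOn, imageSmallSubsets, Set.mem_image, coe_image,
    coe_filter, mem_powerset]
  constructor
  · rintro ⟨e, ⟨hs, he⟩, rfl⟩
    have hSr : (e ∩ B).card ≤ r := he ▸ card_le_card inter_subset_left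
    obtain ⟨hs', he', htr⟩ := hrep (e ∩ B) (inter_subset_right.trans hBA) hSr
    refine ⟨e ∩ B, ⟨inter_subset_right, hSr⟩, hcan _ _ he' he ?_ ?_ ?_⟩
    · exact hs'.trans <|
        Set.union_subset_union_left Y (coe_subset.mpr (inter_subset_right.trans hBA))
    · exact hs.trans (Set.union_subset_union_left Y (coe_subset.mpr hBA))
    · rw [htr, inter_eq_inter_of_subset_union hBA hAY hs]
  · rintro ⟨S, ⟨hSB, hSr⟩, rfl⟩
    obtain ⟨hs, he, -⟩ := hrep S (hSB.trans hBA) hSr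
    exact ⟨_, ⟨hs.trans (Set.union_subset_union_left Y (coe_subset.mpr hSB)), he⟩, rfl⟩

end CanonicalPair

lemma cast_sub_min_le_of_mul_le {m m' a b : ℕ} (r : ℕ) (hm' : m' ≤ m) (hm : 1 ≤ m) (ha : 0 < a)
    (hb : m - m' ≤ b) (hr : (m - m') * a ≤ r * (m - 1)) :
    (m : ℚ) - min (b : ℚ) (r * ((m : ℚ) - 1) / a) ≤ m' := by
  rw [sub_le_comm, le_min_iff, le_div_iff₀ (by exact_mod_cast ha)]
  have hb' := (Nat.cast_le (α := ℚ)).mpr hb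
  have hr' := (Nat.cast_le (α := ℚ)).mpr hr
  push_cast [Nat.cast_sub hm', Nat.cast_sub hm] at hb' hr'
  exact ⟨hb', hr'⟩

theorem main_lemma_general (r : ℕ) (Δ : Finset ℕ → ℕ) (m : ℕ) (hm : m ∈ Fdelta r Δ) (hm2 : 2 ≤ m) :
    ∃ a : ℕ, 1 ≤ a ∧ m ≤ ∑ i ∈ Finset.range (r + 1), Nat.choose a i ∧
      ∃ m' ∈ Fdelta r Δ,
        (m : ℚ) - min ((∑ i ∈ Finset.range r, Nat.choose (a - 1) i : ℕ) : ℚ)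
            ((r : ℚ) * ((m : ℚ) - 1) / (a : ℚ)) ≤ (m' : ℚ) ∧
        m' < m := by
  obtain ⟨X, hX, rfl⟩ := hm
  have hpos : 0 < gamma r Δ X := by omega
  obtain ⟨A₀, Y₀, hAY₀, hcol₀⟩ := exists_isCanonicalPair hX (Set.finite_of_ncard_pos hpos)
  obtain ⟨⟨A, Y⟩, ⟨hAY, hγ⟩, hmin⟩ := (measure fun p : Finset ℕ × Set ℕ => #p.1).wf.has_min
    {p | IsCanonicalPair r Δ p.1 p.2 ∧ gamma r Δ (↑p.1 ∪ p.2) = gamma r Δ X}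
    ⟨(A₀, Y₀), hAY₀, by rw [gamma, hcol₀, ← gamma]⟩
  obtain ⟨φ, hφ⟩ := hAY.exists_gamma_eq
  rw [← hγ, hφ A subset_rfl] at hm2 ⊢
  have hA := nonempty_of_one_lt_card_imageSmallSubsets (by omega : 1 < #(imageSmallSubsets φ r A))
  obtain ⟨w, hwA, hw⟩ := exists_card_imageSmallSubsets_sdiff_erase_mul_le (φ := φ) (r := r) hA
  have hsub := imageSmallSubsets_mono φ r (erase_subset w A)
  have hlt := (card_le_card hsub).lt_of_ne fun heq => hmin (A.erase w, Y)
    ⟨hAY.mono (erase_subset w A), by rw [hφ _ (erase_subset w A), heq, ← hφ A subset_rfl, hγ]⟩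
    (card_erase_lt_of_mem hwA)
  rw [card_sdiff_of_subset hsub] at hw
  refine ⟨#A, hA.card_pos, card_imageSmallSubsets_le φ r A, _,
    ⟨_, hAY.1.mono Set.subset_union_right, hφ _ (erase_subset w A)⟩,
    cast_sub_min_le_of_mul_le r hlt.le (by omega) hA.card_pos ?_ hw, hlt⟩
  rw [← card_sdiff_of_subset hsub]
  exact card_imageSmallSubsets_sdiff_erase_le hwA

/-- **Lemma 5 (main lemma), parts (1) and (2).** For `m ∈ F_Δ` with `m ≥ 2` there is a
natural number `a ≥ 1` with `Σ_{i=0}^{r} C(a,i) ≥ m` such that `F_Δ` meets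
`[m - min(Σ_{i=0}^{r-1} C(a-1,i), r(m-1)/a), m)`. -/
theorem main_lemma (r k : ℕ) (hr : 2 ≤ r) (hk : 1 ≤ k) (Δ : Finset ℕ → ℕ)
    (hΔ : IsColouring r k Δ) (m : ℕ) (hm : m ∈ Fdelta r Δ) (hm2 : 2 ≤ m) :
    ∃ a : ℕ, 1 ≤ a ∧ m ≤ ∑ i ∈ Finset.range (r + 1), Nat.choose a i ∧
      ∃ m' ∈ Fdelta r Δ,
        (m : ℚ) - min ((∑ i ∈ Finset.range r, Nat.choose (a - 1) i : ℕ) : ℚ)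
            ((r : ℚ) * ((m : ℚ) - 1) / (a : ℚ)) ≤ (m' : ℚ) ∧
        m' < m :=
  main_lemma_general r Δ m hm hm2
end
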